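/- Let A ∈ ℝ^{m×n}, V ∈ ℝ^{m×l₁} with orthonormal columns, and Ω₂ ∈ ℝ^{l₂×m} with Ω₂V of full column rank. Then with B = (Ω₂V)†Ω₂A, ‖A − VB‖_F ≤ (1 + ‖V(Ω₂V)†Ω₂‖₂) · ‖A − VVᵀA‖_F. -/

import Mathlib

open Matrix BigOperators

theorem Matrix.isHermitian_transpose_mul_self {m n α : Type*} [Fintype m] [CommSemiring α]
    [StarRing α] [TrivialStar α] (A : Matrix m n α) : (Aᵀ * A).IsHermitian := by
  rw [IsHermitian, conjTranspose_eq_transpose_of_trivial, transpose_mul, transpose_transpose]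

noncomputable def singularValue {m n : ℕ} (A : Matrix (Fin m) (Fin n) ℝ) : Fin n → ℝ :=
  fun j =>
    Real.sqrt ((Matrix.isHermitian_transpose_mul_self A).eigenvalues
      (Tuple.sort (fun i => -(Matrix.isHermitian_transpose_mul_self A).eigenvalues i) j))

noncomputable def matSpectralNorm {m n : ℕ} (A : Matrix (Fin m) (Fin n) ℝ) : ℝ :=
  ‖LinearMap.toContinuousLinearMap (Matrix.toEuclideanLin A)‖

noncomputable def frobNorm {m n : ℕ} (A : Matrix (Fin m) (Fin n) ℝ) : ℝ :=
  Real.sqrt (∑ i, ∑ j, (A i j)^2)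

noncomputable def pinv {a b : ℕ} (W : Matrix (Fin a) (Fin b) ℝ) : Matrix (Fin b) (Fin a) ℝ :=
  if a ≤ b then Wᵀ * (W * Wᵀ)⁻¹ else (Wᵀ * W)⁻¹ * Wᵀ

/-! The columns of `Ω₂V` are independent, so `(Ω₂V)† Ω₂ V = 1` and `P = V (Ω₂V)† Ω₂` fixes the
columns of `V`. Hence `A - VB = A - PA = E - PE` with `E = A - VVᵀA`, and
`‖E - PE‖_F ≤ ‖E‖_F + ‖P‖₂ ‖E‖_F` because the spectral norm bounds `P` column by column. -/

lemma frobNorm_sq_eq_sum_norm_col {m n : ℕ} (A : Matrix (Fin m) (Fin n) ℝ) :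
    frobNorm A ^ 2 = ∑ j, ‖(WithLp.toLp 2 (Aᵀ j) : EuclideanSpace ℝ (Fin m))‖ ^ 2 := by
  rw [frobNorm, Real.sq_sqrt (by positivity)]
  simp only [EuclideanSpace.norm_sq_eq, Real.norm_eq_abs, sq_abs, transpose_apply]
  exact Finset.sum_comm

lemma frobNorm_mul_le {m n k : ℕ} (M : Matrix (Fin m) (Fin n) ℝ) (N : Matrix (Fin n) (Fin k) ℝ) :
    frobNorm (M * N) ≤ matSpectralNorm M * frobNorm N := by
  have hMN : 0 ≤ frobNorm (M * N) := Real.sqrt_nonneg _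
  have hbound : 0 ≤ matSpectralNorm M * frobNorm N :=
    mul_nonneg (norm_nonneg _) (Real.sqrt_nonneg _)
  refine (pow_le_pow_iff_left₀ hMN hbound two_ne_zero).mp ?_
  rw [frobNorm_sq_eq_sum_norm_col, mul_pow, frobNorm_sq_eq_sum_norm_col, Finset.mul_sum]
  gcongr with j
  have hcol : (M * N)ᵀ j = M *ᵥ Nᵀ j := by ext i; simp [mul_apply, mulVec, dotProduct]
  rw [hcol, ← mul_pow]
  exact pow_le_pow_left₀ (norm_nonneg _)
    ((LinearMap.toContinuousLinearMap (toEuclideanLin M)).le_opNorm (WithLp.toLp 2 (Nᵀ j))) 2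

section
attribute [local instance] Matrix.frobeniusNormedAddCommGroup

lemma frobNorm_eq_norm {m n : ℕ} (A : Matrix (Fin m) (Fin n) ℝ) : frobNorm A = ‖A‖ := by
  rw [frobenius_norm_def, frobNorm, Real.sqrt_eq_rpow]
  simp only [Real.norm_eq_abs, Real.rpow_two, sq_abs]

lemma frobNorm_sub_le {m n : ℕ} (X Y : Matrix (Fin m) (Fin n) ℝ) :
    frobNorm (X - Y) ≤ frobNorm X + frobNorm Y := by
  simpa only [frobNorm_eq_norm] using norm_sub_le X Y

end

lemma frobNorm_sub_mul_le {m n : ℕ} (P : Matrix (Fin m) (Fin m) ℝ) (E : Matrix (Fin m) (Fin n) ℝ) :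
    frobNorm (E - P * E) ≤ (1 + matSpectralNorm P) * frobNorm E := by
  calc frobNorm (E - P * E) ≤ frobNorm E + frobNorm (P * E) := frobNorm_sub_le _ _
    _ ≤ frobNorm E + matSpectralNorm P * frobNorm E := by gcongr; exact frobNorm_mul_le P E
    _ = (1 + matSpectralNorm P) * frobNorm E := by ring

lemma isUnit_of_rank_eq {k : ℕ} (M : Matrix (Fin k) (Fin k) ℝ) (h : M.rank = k) : IsUnit M := by
  rw [← mulVec_surjective_iff_isUnit]
  refine (LinearMap.range_eq_top (f := M.mulVecLin)).mp (Submodule.eq_top_of_finrank_eq ?_)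
  rw [← rank, h, Module.finrank_fin_fun]

lemma pinv_mul_self_of_rank_eq {a b : ℕ} (W : Matrix (Fin a) (Fin b) ℝ) (hW : W.rank = b) :
    pinv W * W = 1 := by
  rw [pinv]
  split_ifs with hab
  · -- full column rank forces `b ≤ a`, so this branch is the square case
    obtain rfl : a = b := le_antisymm hab (hW ▸ W.rank_le_card_height |>.trans (by simp))
    have hdet : IsUnit W.det := (isUnit_iff_isUnit_det W).mp (isUnit_of_rank_eq W hW)
    rw [Matrix.mul_inv_rev, ← Matrix.mul_assoc, mul_nonsing_inv _ (by rwa [det_transpose]),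
      Matrix.one_mul, nonsing_inv_mul _ hdet]
  · have hWW : IsUnit (Wᵀ * W).det := (isUnit_iff_isUnit_det _).mp <|
      isUnit_of_rank_eq _ (by rw [rank_transpose_mul_self, hW])
    rw [Matrix.mul_assoc, nonsing_inv_mul _ hWW]

lemma sub_mul_eq_sub_mul_sub_of_mul_eq {m n k : ℕ} {P : Matrix (Fin m) (Fin m) ℝ}
    {V : Matrix (Fin m) (Fin k) ℝ} (hPV : P * V = V) (A : Matrix (Fin m) (Fin n) ℝ)
    (C : Matrix (Fin k) (Fin n) ℝ) :
    A - P * A = (A - V * C) - P * (A - V * C) := by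
  rw [Matrix.mul_sub, ← Matrix.mul_assoc, hPV]
  abel

theorem single_pass_frobenius_bound_general {m n l₁ l₂ : ℕ} (A : Matrix (Fin m) (Fin n) ℝ)
    (V : Matrix (Fin m) (Fin l₁) ℝ)
    (Ω₂ : Matrix (Fin l₂) (Fin m) ℝ)
    (hrank : (Ω₂ * V).rank = l₁)
    (B : Matrix (Fin l₁) (Fin n) ℝ) (hB : B = pinv (Ω₂ * V) * (Ω₂ * A)) :
    frobNorm (A - V * B) ≤
      (1 + matSpectralNorm (V * pinv (Ω₂ * V) * Ω₂)) * frobNorm (A - V * (Vᵀ * A)) := by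
  set P := V * pinv (Ω₂ * V) * Ω₂
  have hPV : P * V = V := by
    rw [Matrix.mul_assoc, Matrix.mul_assoc, pinv_mul_self_of_rank_eq _ hrank, Matrix.mul_one]
  have hVB : V * B = P * A := by simp only [hB, P, Matrix.mul_assoc]
  rw [hVB, sub_mul_eq_sub_mul_sub_of_mul_eq hPV A (Vᵀ * A)]
  exact frobNorm_sub_mul_le P _

/-- Single-pass error bound in the Frobenius norm:
‖A − VB‖_F ≤ (1 + ‖V(Ω₂V)†Ω₂‖₂)·‖A − VVᵀA‖_F with B = (Ω₂V)†Ω₂A. -/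
theorem single_pass_frobenius_bound {m n l₁ l₂ : ℕ} (A : Matrix (Fin m) (Fin n) ℝ)
    (V : Matrix (Fin m) (Fin l₁) ℝ) (hV : Vᵀ * V = 1)
    (Ω₂ : Matrix (Fin l₂) (Fin m) ℝ)
    (hrank : (Ω₂ * V).rank = l₁)
    (B : Matrix (Fin l₁) (Fin n) ℝ) (hB : B = pinv (Ω₂ * V) * (Ω₂ * A)) :
    frobNorm (A - V * B) ≤
      (1 + matSpectralNorm (V * pinv (Ω₂ * V) * Ω₂)) * frobNorm (A - V * (Vᵀ * A)) :=
  single_pass_frobenius_bound_general A V Ω₂ hrank B hB
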